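/- arXiv:2201.12014 — 3 statements merged into one kernel-verified Lean document; each statement's English description precedes it below -/
import Mathlib

section
/- Let H be a real Hilbert space and let y, z : I_n → H be polynomial functions of degree at most k (with coefficients in a finite-dimensional subspace V_h ⊆ H). If ∫_{I_n} ⟨y'(t) - z(t), φ(t)⟩ dt = 0 for all V_h-valued polynomials φ of degree at most k-1, and y', z take values in V_h, then y'(t^G_μ) = z(t^G_μ) at each of the k Gauss quadrature nodes t^G_μ of I_n. -/
open MeasureTheory intervalIntegral Polynomial

/-!
Fix `v ∈ V_h`. The scalar function `t ↦ ⟪y' t - z t, v⟫` is a real polynomial `q` of degree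
`≤ k` that is `L²(a, b)`-orthogonal to all polynomials of degree `≤ k - 1`. Testing with the
Lagrange basis polynomial `ℓ_μ` of the Gauss nodes, `ℓ_μ q` has degree `≤ 2k - 1`, so the
quadrature rule integrates it exactly and only the node `t^G_μ` survives:
`ω_μ q(t^G_μ) = 0`. Hence `y'(t^G_μ) - z(t^G_μ) ∈ V_h` is orthogonal to `V_h`, so it vanishes.
-/

theorem eval_node_eq_zero_of_integral_mul_eq_zero {k : ℕ} {a b : ℝ} {tG ω : Fin k → ℝ}
    (htG : Function.Injective tG) (hω : ∀ μ, 0 < ω μ)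
    (hexact : ∀ p : ℝ[X], p.natDegree ≤ 2 * k - 1 →
      ∑ μ, ω μ * p.eval (tG μ) = ∫ s in a..b, p.eval s)
    {q : ℝ[X]} (hq : q.natDegree ≤ k)
    (horth : ∀ ξ : ℝ[X], ξ.natDegree ≤ k - 1 → ∫ t in a..b, ξ.eval t * q.eval t = 0)
    (μ : Fin k) : q.eval (tG μ) = 0 := by
  have hinj : Set.InjOn tG (Finset.univ : Finset (Fin k)) := htG.injOn
  set ℓ := Lagrange.basis Finset.univ tG μ
  have hℓ : ℓ.natDegree ≤ k - 1 := by
    simp [ℓ, Lagrange.natDegree_basis hinj (Finset.mem_univ μ)]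
  have hquad : ∑ ν, ω ν * (ℓ * q).eval (tG ν) = ω μ * q.eval (tG μ) := by
    rw [Finset.sum_eq_single μ (fun ν _ hν => by simp [ℓ, Lagrange.eval_basis_of_ne hν.symm])
      (by simp)]
    simp [ℓ, Lagrange.eval_basis_self hinj (Finset.mem_univ μ)]
  have hdeg : (ℓ * q).natDegree ≤ 2 * k - 1 := by
    have := natDegree_mul_le (p := ℓ) (q := q)
    omega
  have hzero : ω μ * q.eval (tG μ) = 0 := by
    rw [← hquad, hexact _ hdeg]
    simpa using horth ℓ hℓ
  exact (mul_eq_zero.1 hzero).resolve_left (hω μ).ne'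

theorem exists_natDegree_le_eval_eq_inner_sum_pow_smul {H : Type*} [NormedAddCommGroup H]
    [InnerProductSpace ℝ H] {n : ℕ} (c : Fin (n + 1) → H) (v : H) :
    ∃ q : ℝ[X], q.natDegree ≤ n ∧
      ∀ t, q.eval t = inner ℝ (∑ i : Fin (n + 1), t ^ (i : ℕ) • c i) v := by
  refine ⟨∑ i : Fin (n + 1), C (inner ℝ (c i) v) * X ^ (i : ℕ), ?_, fun t => ?_⟩
  · refine natDegree_sum_le_of_forall_le _ _ fun i _ => ?_
    exact (natDegree_C_mul_X_pow_le _ _).trans (Nat.le_of_lt_succ i.2)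
  · simp only [eval_finsetSum, eval_mul, eval_C, eval_pow, eval_X, sum_inner,
      real_inner_smul_left, mul_comm]

theorem gauss_node_identity_general {H : Type*} [NormedAddCommGroup H]
    [InnerProductSpace ℝ H]
    (k : ℕ) (a b : ℝ)
    (Vh : Submodule ℝ H)
    (tG ω : Fin k → ℝ)
    (htG : Function.Injective tG)
    (hω : ∀ μ, 0 < ω μ)
    (hexact : ∀ p : Polynomial ℝ, p.natDegree ≤ 2 * k - 1 →
      ∑ μ, ω μ * p.eval (tG μ) = ∫ s in a..b, p.eval s)
    (y' z : ℝ → H) (cy cz : Fin (k + 1) → H)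
    (hcy : ∀ i, cy i ∈ Vh) (hcz : ∀ i, cz i ∈ Vh)
    (hy' : ∀ t, y' t = ∑ i : Fin (k + 1), t ^ (i : ℕ) • cy i)
    (hz : ∀ t, z t = ∑ i : Fin (k + 1), t ^ (i : ℕ) • cz i)
    (horth : ∀ ξ : Polynomial ℝ, ξ.natDegree ≤ k - 1 → ∀ v ∈ Vh,
      ∫ t in a..b, (inner ℝ (y' t - z t) (ξ.eval t • v) : ℝ) = 0) :
    ∀ μ, y' (tG μ) = z (tG μ) := by
  intro μ
  have hdiff : ∀ t, y' t - z t = ∑ i : Fin (k + 1), t ^ (i : ℕ) • (cy i - cz i) := fun t => by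
    simp only [hy', hz, smul_sub, Finset.sum_sub_distrib]
  have hperp : ∀ v ∈ Vh, inner ℝ (y' (tG μ) - z (tG μ)) v = (0 : ℝ) := by
    intro v hv
    obtain ⟨q, hqdeg, hq⟩ := exists_natDegree_le_eval_eq_inner_sum_pow_smul (cy - cz) v
    simp only [Pi.sub_apply, ← hdiff] at hq
    rw [← hq]
    refine eval_node_eq_zero_of_integral_mul_eq_zero htG hω hexact hqdeg (fun ξ hξ => ?_) μ
    simpa [hq, real_inner_smul_right, mul_comm] using horth ξ hξ v hv
  have hmem : y' (tG μ) - z (tG μ) ∈ Vh := by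
    rw [hdiff]
    exact Vh.sum_mem fun i _ => Vh.smul_mem _ (Vh.sub_mem (hcy i) (hcz i))
  exact sub_eq_zero.1 (inner_self_eq_zero.1 (hperp _ hmem))

/-- If `y` is a `V_h`-valued polynomial of degree ≤ k with derivative `y'`, `z` is a
`V_h`-valued polynomial of degree ≤ k, and `∫ ⟨y' - z, φ⟩ = 0` for all test functions
`φ(t) = ξ(t) • v` with `ξ` a real polynomial of degree ≤ k-1 and `v ∈ V_h`, then
`y' = z` at each of the `k` Gauss quadrature nodes of the interval. -/
theorem gauss_node_identity {H : Type*} [NormedAddCommGroup H]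
    [InnerProductSpace ℝ H] [CompleteSpace H]
    (k : ℕ) (hk : 1 ≤ k) (a b : ℝ) (hab : a < b)
    (Vh : Submodule ℝ H)
    (tG ω : Fin k → ℝ)
    (htG : Function.Injective tG) (hmemG : ∀ μ, tG μ ∈ Set.Ioo a b)
    (hω : ∀ μ, 0 < ω μ)
    (hexact : ∀ p : Polynomial ℝ, p.natDegree ≤ 2 * k - 1 →
      ∑ μ, ω μ * p.eval (tG μ) = ∫ s in a..b, p.eval s)
    (y y' z : ℝ → H) (cy cz : Fin (k + 1) → H)
    (hcy : ∀ i, cy i ∈ Vh) (hcz : ∀ i, cz i ∈ Vh)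
    (hy' : ∀ t, y' t = ∑ i : Fin (k + 1), t ^ (i : ℕ) • cy i)
    (hz : ∀ t, z t = ∑ i : Fin (k + 1), t ^ (i : ℕ) • cz i)
    (hyderiv : ∀ t, HasDerivAt y (y' t) t)
    (horth : ∀ ξ : Polynomial ℝ, ξ.natDegree ≤ k - 1 → ∀ v ∈ Vh,
      ∫ t in a..b, (inner ℝ (y' t - z t) (ξ.eval t • v) : ℝ) = 0) :
    ∀ μ, y' (tG μ) = z (tG μ) :=
  gauss_node_identity_general k a b Vh tG ω htG hω hexact y' z cy cz hcy hcz hy' hz horth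
end

section
/- Let H be a real Hilbert space and e : [a,b] → H a polynomial of degree at most k with derivative e'. If c_0 > 0, then ∫_a^b c_0 ⟨e'(t), Π^{k-1} e(t)⟩ dt = (c_0/2) ‖e(b)‖² − (c_0/2) ‖e(a)‖², where Π^{k-1} is the L^2(a,b)-orthogonal projection onto H-valued polynomials of degree at most k-1. -/
open MeasureTheory intervalIntegral

/-! The derivative `e'` is itself a polynomial of degree at most `k - 1`, so it is an admissible
test function in the orthogonality relation of `Π^{k-1}`: hence `∫ ⟪e', Π^{k-1} e⟫ = ∫ ⟪e', e⟫`,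
and `⟪e', e⟫ = (1/2) d/dt ‖e‖²` turns the latter into boundary terms. -/

section PolynomialCurve

variable {E : Type*} [NormedAddCommGroup E] [NormedSpace ℝ E]

theorem hasDerivAt_sum_pow_smul {n : ℕ} (c : Fin (n + 1) → E) (t : ℝ) :
    HasDerivAt (fun s => ∑ i : Fin (n + 1), s ^ (i : ℕ) • c i)
      (∑ j : Fin n, t ^ (j : ℕ) • (((j : ℕ) + 1 : ℝ) • c j.succ)) t := by
  have hsum := HasDerivAt.fun_sum (u := Finset.univ) fun (i : Fin (n + 1)) _ =>
    (hasDerivAt_pow (i : ℕ) t).smul_const (c i)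
  convert hsum using 1
  simp [Fin.sum_univ_succ, smul_smul, mul_comm]

theorem continuous_sum_pow_smul {n : ℕ} (c : Fin n → E) :
    Continuous fun s : ℝ => ∑ i : Fin n, s ^ (i : ℕ) • c i := by
  fun_prop

end PolynomialCurve

section InnerProduct

variable {H : Type*} [NormedAddCommGroup H] [InnerProductSpace ℝ H]

theorem integral_inner_deriv_self {e e' : ℝ → H} {a b : ℝ}
    (hderiv : ∀ t ∈ Set.uIcc a b, HasDerivAt e (e' t) t)
    (hint : IntervalIntegrable (fun t => inner ℝ (e' t) (e t)) volume a b) :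
    ∫ t in a..b, inner ℝ (e' t) (e t) = ‖e b‖ ^ 2 / 2 - ‖e a‖ ^ 2 / 2 := by
  refine integral_eq_sub_of_hasDerivAt (f := fun t => ‖e t‖ ^ 2 / 2) (fun t ht => ?_) hint
  have h := (hderiv t ht).norm_sq.div_const 2
  rwa [real_inner_comm, mul_div_cancel_left₀ _ two_ne_zero] at h

theorem integral_mul_inner_deriv_eq_of_integral_inner_sub_eq_zero {e e' P : ℝ → H} {a b : ℝ}
    (c₀ : ℝ) (hderiv : ∀ t, HasDerivAt e (e' t) t) (he' : Continuous e') (hP : Continuous P)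
    (horth : ∫ t in a..b, inner ℝ (P t - e t) (e' t) = 0) :
    ∫ t in a..b, c₀ * inner ℝ (e' t) (P t) = c₀ / 2 * ‖e b‖ ^ 2 - c₀ / 2 * ‖e a‖ ^ 2 := by
  have he : Continuous e := continuous_iff_continuousAt.2 fun t => (hderiv t).continuousAt
  have hsplit : ∀ t, inner ℝ (e' t) (P t) = inner ℝ (e' t) (e t) + inner ℝ (P t - e t) (e' t) := by
    intro t
    rw [inner_sub_left, real_inner_comm (P t), real_inner_comm (e t)]
    ring
  have hftc := integral_inner_deriv_self (fun t _ => hderiv t) ((he'.inner he).intervalIntegrable a b)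
  simp_rw [intervalIntegral.integral_const_mul, hsplit]
  rw [integral_add ((he'.inner he).intervalIntegrable a b)
    (((hP.sub he).inner he').intervalIntegrable a b), hftc, horth]
  ring

end InnerProduct

theorem energy_identity_projection_general {H : Type*} [NormedAddCommGroup H]
    [InnerProductSpace ℝ H]
    (k : ℕ) (a b : ℝ) (c₀ : ℝ)
    (e e' P : ℝ → H) (ce : Fin (k + 1) → H) (cP : Fin k → H)
    (he : ∀ t, e t = ∑ i : Fin (k + 1), t ^ (i : ℕ) • ce i)
    (hderiv : ∀ t, HasDerivAt e (e' t) t)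
    (hP : ∀ t, P t = ∑ i : Fin k, t ^ (i : ℕ) • cP i)
    (horth : ∀ (q : ℝ → H) (cq : Fin k → H),
      (∀ t, q t = ∑ i : Fin k, t ^ (i : ℕ) • cq i) →
      ∫ t in a..b, (inner ℝ (P t - e t) (q t) : ℝ) = 0) :
    ∫ t in a..b, c₀ * (inner ℝ (e' t) (P t) : ℝ) =
      c₀ / 2 * ‖e b‖ ^ 2 - c₀ / 2 * ‖e a‖ ^ 2 := by
  obtain rfl : e = _ := funext he
  obtain rfl : P = _ := funext hP
  set cq : Fin k → H := fun j => ((j : ℕ) + 1 : ℝ) • ce j.succ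
  have he' : ∀ t, e' t = ∑ j : Fin k, t ^ (j : ℕ) • cq j :=
    fun t => (hderiv t).unique (hasDerivAt_sum_pow_smul ce t)
  obtain rfl : e' = _ := funext he'
  exact integral_mul_inner_deriv_eq_of_integral_inner_sub_eq_zero c₀ hderiv
    (continuous_sum_pow_smul cq) (continuous_sum_pow_smul cP) (horth _ cq fun _ => rfl)

/-- For an `H`-valued polynomial `e` of degree at most `k` with derivative `e'` and
`L²(a,b)`-projection `P = Π^{k-1} e` onto polynomials of degree at most `k-1`, and any
`c₀ > 0`, `∫_a^b c₀ ⟨e', P e⟩ dt = (c₀/2) ‖e b‖² - (c₀/2) ‖e a‖²`. -/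
theorem energy_identity_projection {H : Type*} [NormedAddCommGroup H]
    [InnerProductSpace ℝ H] [CompleteSpace H]
    (k : ℕ) (hk : 1 ≤ k) (a b : ℝ) (hab : a < b) (c₀ : ℝ) (hc₀ : 0 < c₀)
    (e e' P : ℝ → H) (ce : Fin (k + 1) → H) (cP : Fin k → H)
    (he : ∀ t, e t = ∑ i : Fin (k + 1), t ^ (i : ℕ) • ce i)
    (hderiv : ∀ t, HasDerivAt e (e' t) t)
    (hP : ∀ t, P t = ∑ i : Fin k, t ^ (i : ℕ) • cP i)
    (horth : ∀ (q : ℝ → H) (cq : Fin k → H),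
      (∀ t, q t = ∑ i : Fin k, t ^ (i : ℕ) • cq i) →
      ∫ t in a..b, (inner ℝ (P t - e t) (q t) : ℝ) = 0) :
    ∫ t in a..b, c₀ * (inner ℝ (e' t) (P t) : ℝ) =
      c₀ / 2 * ‖e b‖ ^ 2 - c₀ / 2 * ‖e a‖ ^ 2 :=
  energy_identity_projection_general k a b c₀ e e' P ce cP he hderiv hP horth
end

section
/- Suppose the nonnegative sequences (A_n)_{n=0}^N and the real sequence (δ_n)_{n=0}^N satisfy A_n ≤ δ_n − δ_{n−1} + (1 + cτ) A_{n−1} + g for all n ≥ 2 and A_1 ≤ g, where c ≥ 0, τ > 0 with Nτ ≤ T, g ≥ 0, and |δ_n| ≤ g + ε A_n for all n with 0 < ε < 1/2. Then there exists C depending only on c, T, ε with A_n ≤ C · N · g for all 1 ≤ n ≤ N. -/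
/-!
With `B n = A n - δ n + g`, the telescoping recursion reads `B n ≤ B (n-1) + cτ A (n-1) + g`,
so the coupling terms disappear. Since `|δ n| ≤ g + ε A n` with `ε < 1/2`, `A n ≤ 2 B n`, hence
`B n ≤ (1 + 2cτ) B (n-1) + g` and `B 1 ≤ 4g`; the discrete Grönwall inequality then gives
`B n ≤ (3 + n) g e^{2cT}`, and `A n ≤ 2 B n ≤ 8 e^{2cT} N g`.
-/

open Real

theorem discrete_gronwall_const_finite_horizon {u : ℕ → ℝ} {c b : ℝ} {n₀ N : ℕ}
    (hc : 0 ≤ c) (hb : 0 ≤ b) (hu_nonneg : ∀ n, n₀ ≤ n → n ≤ N → 0 ≤ u n)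
    (hu : ∀ n, n₀ ≤ n → n < N → u (n + 1) ≤ (1 + c) * u n + b)
    {n : ℕ} (hn₀ : n₀ ≤ n) (hnN : n ≤ N) :
    u n ≤ (u n₀ + (n - n₀ : ℕ) * b) * exp ((n - n₀ : ℕ) * c) := by
  -- Freezing `u` at time `N` makes the recursion hold for every `n ≥ n₀`.
  have hfrozen : ∀ n ≥ n₀, u (min (n + 1) N) ≤ (1 + c) * u (min n N) + b := by
    intro m hm
    rcases lt_or_ge m N with hmN | hmN
    · rw [min_eq_left hmN.le, min_eq_left hmN]
      exact hu m hm hmN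
    · rw [min_eq_right hmN, min_eq_right (by omega)]
      nlinarith [hu_nonneg N (by omega) le_rfl]
  have hn₀N : min n₀ N = n₀ := min_eq_left (hn₀.trans hnN)
  have := discrete_gronwall (u := fun m => u (min m N)) (c := fun _ => c) (b := fun _ => b)
    (n₀ := n₀) (by simpa [hn₀N] using hu_nonneg n₀ le_rfl (hn₀.trans hnN)) hfrozen
    (fun _ _ => hc) (fun _ _ => hb) hn₀
  simpa [min_eq_left hnN, hn₀N] using this

theorem le_two_mul_sub_add_of_abs_le {a d g ε : ℝ} (ha : 0 ≤ a) (hε : ε < 1 / 2)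
    (hd : |d| ≤ g + ε * a) : a ≤ 2 * (a - d + g) := by
  have hεa : ε * a ≤ a / 2 := by nlinarith
  linarith [le_of_abs_le hd]

section Telescoping

variable {N : ℕ} {c τ g ε : ℝ} {A δ : ℕ → ℝ}

theorem sub_add_succ_le_of_telescoping (hcτ : 0 ≤ c * τ) (hε : ε < 1 / 2)
    (hA : ∀ n, n ≤ N → 0 ≤ A n)
    (hrec : ∀ n, 2 ≤ n → n ≤ N → A n ≤ δ n - δ (n - 1) + (1 + c * τ) * A (n - 1) + g)
    (hδ : ∀ n, n ≤ N → |δ n| ≤ g + ε * A n) {k : ℕ} (hk : 1 ≤ k) (hkN : k < N) :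
    A (k + 1) - δ (k + 1) + g ≤ (1 + 2 * c * τ) * (A k - δ k + g) + g := by
  have hstep := hrec (k + 1) (by omega) hkN
  rw [Nat.add_sub_cancel] at hstep
  have hAk := mul_le_mul_of_nonneg_left
    (le_two_mul_sub_add_of_abs_le (hA k hkN.le) hε (hδ k hkN.le)) hcτ
  linarith

end Telescoping

theorem telescoping_gronwall_general (c T ε : ℝ) (hc : 0 ≤ c) (hε : ε < 1 / 2) :
    ∃ C : ℝ, 0 < C ∧
      ∀ (N : ℕ) (τ g : ℝ) (A δ : ℕ → ℝ),
        0 < τ → (N : ℝ) * τ ≤ T → 0 ≤ g →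
        (∀ n, n ≤ N → 0 ≤ A n) →
        (∀ n, 2 ≤ n → n ≤ N → A n ≤ δ n - δ (n - 1) + (1 + c * τ) * A (n - 1) + g) →
        A 1 ≤ g →
        (∀ n, n ≤ N → |δ n| ≤ g + ε * A n) →
        ∀ n, 1 ≤ n → n ≤ N → A n ≤ C * N * g := by
  refine ⟨8 * exp (2 * c * T), by positivity, ?_⟩
  intro N τ g A δ hτ hNT hg hA hrec hA1 hδ n hn1 hnN
  have hcτ : 0 ≤ c * τ := mul_nonneg hc hτ.le
  have hA_le (m : ℕ) (hm : m ≤ N) : A m ≤ 2 * (A m - δ m + g) :=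
    le_two_mul_sub_add_of_abs_le (hA m hm) hε (hδ m hm)
  have hgron := discrete_gronwall_const_finite_horizon (u := fun m => A m - δ m + g)
    (c := 2 * c * τ) (by positivity) hg (fun m _ hm => by linarith [hA m hm, hA_le m hm])
    (fun k hk hkN => by
      simpa only [mul_assoc] using sub_add_succ_le_of_telescoping hcτ hε hA hrec hδ hk hkN)
    hn1 hnN
  have hB1 : A 1 - δ 1 + g ≤ 4 * g := by
    have hεA1 : ε * A 1 ≤ A 1 / 2 := by nlinarith [hA 1 (hn1.trans hnN)]
    linarith [neg_le_of_abs_le (hδ 1 (hn1.trans hnN))]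
  have hn : ((n - 1 : ℕ) : ℝ) + 1 ≤ N := by
    rw [Nat.cast_sub hn1]; push_cast; linarith [(Nat.cast_le (α := ℝ)).2 hnN]
  have hN : (1 : ℝ) ≤ N := by exact_mod_cast hn1.trans hnN
  have hexp : exp ((n - 1 : ℕ) * (2 * c * τ)) ≤ exp (2 * c * T) := by
    have : ((n - 1 : ℕ) : ℝ) * τ ≤ T := by nlinarith
    exact exp_le_exp.2 (by nlinarith)
  calc A n ≤ 2 * (A n - δ n + g) := hA_le n hnN
    _ ≤ 2 * ((4 * g + (n - 1 : ℕ) * g) * exp (2 * c * T)) := by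
        gcongr 2 * ?_
        exact hgron.trans (by gcongr)
    _ ≤ 2 * ((4 * N * g) * exp (2 * c * T)) := by gcongr; nlinarith
    _ = 8 * exp (2 * c * T) * N * g := by ring

/-- Abstract telescoping-plus-Gronwall argument: if nonnegative `A n` satisfy
`A n ≤ δ n - δ (n-1) + (1 + cτ) A (n-1) + g` for `2 ≤ n ≤ N`, `A 1 ≤ g`, with `c ≥ 0`,
`τ > 0`, `N τ ≤ T`, `g ≥ 0`, and `|δ n| ≤ g + ε A n` for all `n ≤ N` with `0 < ε < 1/2`,
then there is a constant `C` depending only on `c`, `T`, `ε` such that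
`A n ≤ C N g` for all `1 ≤ n ≤ N`. -/
theorem telescoping_gronwall (c T ε : ℝ) (hc : 0 ≤ c) (hε₀ : 0 < ε) (hε : ε < 1 / 2) :
    ∃ C : ℝ, 0 < C ∧
      ∀ (N : ℕ) (τ g : ℝ) (A δ : ℕ → ℝ),
        0 < τ → (N : ℝ) * τ ≤ T → 0 ≤ g →
        (∀ n, n ≤ N → 0 ≤ A n) →
        (∀ n, 2 ≤ n → n ≤ N → A n ≤ δ n - δ (n - 1) + (1 + c * τ) * A (n - 1) + g) →
        A 1 ≤ g →
        (∀ n, n ≤ N → |δ n| ≤ g + ε * A n) →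
        ∀ n, 1 ≤ n → n ≤ N → A n ≤ C * N * g :=
  telescoping_gronwall_general c T ε hc hε
end
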